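/- arXiv:2206.10875 — 2 statements merged into one kernel-verified Lean document; each statement's English description precedes it below -/
import Mathlib

section
/- Let d ≥ 1, ᾱ ∈ (0,1), r > 0, ε ≥ 0, and x₀, Δx ∈ ℝ^d with ‖Δx‖₂ < r. Let μ = N(√ᾱ·x₀, (1−ᾱ)·I_d) and ν = N(√ᾱ·(x₀+Δx), (1−ᾱ)·I_d) be the laws of the diffused clean and adversarial inputs. Then for every measurable set E ⊆ ℝ^d, ν(E) ≤ e^ε·μ(E) + Φ( r·√ᾱ/(2·√(1−ᾱ)) − ε·√(1−ᾱ)/(r·√ᾱ) ). -/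
open MeasureTheory ProbabilityTheory Real

/-- The Gaussian probability measure `N(m, σ² I_d)` on `ℝ^d`, given by its Lebesgue density. -/
noncomputable def gaussian (d : ℕ) (m : EuclideanSpace ℝ (Fin d)) (σ2 : ℝ) :
    Measure (EuclideanSpace ℝ (Fin d)) :=
  volume.withDensity fun x => ENNReal.ofReal
    ((2 * π * σ2) ^ (-(d : ℝ) / 2) * Real.exp (-‖x - m‖ ^ 2 / (2 * σ2)))

/-- The standard normal cumulative distribution function `Φ`. -/
noncomputable def stdNormalCDF (x : ℝ) : ℝ := (gaussianReal 0 1 (Set.Iic x)).toReal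

/-! Write `μ = N(m₁, σ² I)` and `ν = N(m₂, σ² I)`. Outside the half-space
`{x | ⟪u, x - m₂⟫ ≤ a}`, where `u` is the unit vector pointing from `m₂` to `m₁` and
`a = R/2 - σ²ε/R` for any `R ≥ ‖m₁ - m₂‖`, the ratio of the two densities is at most `e^ε`;
hence `ν E ≤ e^ε μ E + ν {⟪u, x - m₂⟫ ≤ a}`. Comparing characteristic functions, `ν` is the image
of the standard Gaussian under `x ↦ m₂ + σ x`, so the half-space has `ν`-mass `Φ(a / σ)`; with
`R = r √ᾱ` this is the stated bound. -/

open scoped ENNReal RealInnerProductSpace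

variable {d : ℕ} {m : EuclideanSpace ℝ (Fin d)} {σ2 : ℝ}

noncomputable def gaussianDensity (d : ℕ) (m : EuclideanSpace ℝ (Fin d)) (σ2 : ℝ)
    (x : EuclideanSpace ℝ (Fin d)) : ℝ :=
  (2 * π * σ2) ^ (-(d : ℝ) / 2) * Real.exp (-‖x - m‖ ^ 2 / (2 * σ2))

lemma gaussian_eq_withDensity :
    gaussian d m σ2 = volume.withDensity fun x => ENNReal.ofReal (gaussianDensity d m σ2 x) :=
  rfl

lemma measurable_gaussianDensity : Measurable (gaussianDensity d m σ2) := by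
  unfold gaussianDensity
  fun_prop

lemma gaussianDensity_nonneg (hσ2 : 0 ≤ σ2) (x : EuclideanSpace ℝ (Fin d)) :
    0 ≤ gaussianDensity d m σ2 x := by
  unfold gaussianDensity
  positivity

lemma gaussianDensity_eq (x : EuclideanSpace ℝ (Fin d)) :
    gaussianDensity d m σ2 x =
      (2 * π * σ2) ^ (-(d : ℝ) / 2) * Real.exp (-(2 * σ2)⁻¹ * ‖x - m‖ ^ 2) := by
  rw [gaussianDensity]
  congr 2
  ring

lemma gaussian_normalization (hσ2 : 0 < σ2) :
    (2 * π * σ2) ^ (-(d : ℝ) / 2) * (π / (2 * σ2)⁻¹) ^ ((d : ℝ) / 2) = 1 := by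
  rw [div_inv_eq_mul, show π * (2 * σ2) = 2 * π * σ2 by ring, neg_div, rpow_neg (by positivity),
    inv_mul_cancel₀ (by positivity)]

lemma integrable_exp_neg_mul_sq_norm {V : Type*} [NormedAddCommGroup V] [InnerProductSpace ℝ V]
    [FiniteDimensional ℝ V] [MeasurableSpace V] [BorelSpace V] {b : ℝ} (hb : 0 < b) :
    Integrable fun v : V => Real.exp (-b * ‖v‖ ^ 2) := by
  have := (GaussianFourier.integrable_cexp_neg_mul_sq_norm_add (V := V) (b := b)
    (by simpa using hb) 0 0).norm
  simpa [Complex.norm_exp, ← Complex.ofReal_pow] using this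

lemma integrable_gaussianDensity (hσ2 : 0 < σ2) : Integrable (gaussianDensity d m σ2) := by
  simp_rw [funext gaussianDensity_eq]
  exact ((integrable_exp_neg_mul_sq_norm (by positivity)).const_mul _).comp_sub_right m

lemma integral_gaussianDensity (hσ2 : 0 < σ2) : ∫ x, gaussianDensity d m σ2 x = 1 := by
  simp_rw [gaussianDensity_eq]
  rw [integral_sub_right_eq_self (fun y => (2 * π * σ2) ^ (-(d : ℝ) / 2) *
      Real.exp (-(2 * σ2)⁻¹ * ‖y‖ ^ 2)) m, integral_const_mul,
    GaussianFourier.integral_rexp_neg_mul_sq_norm (by positivity), finrank_euclideanSpace_fin,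
    gaussian_normalization hσ2]

lemma isProbabilityMeasure_gaussian (hσ2 : 0 < σ2) : IsProbabilityMeasure (gaussian d m σ2) := by
  constructor
  rw [gaussian_eq_withDensity, withDensity_apply _ MeasurableSet.univ, Measure.restrict_univ,
    ← ofReal_integral_eq_lintegral_ofReal (integrable_gaussianDensity hσ2)
      (ae_of_all _ (gaussianDensity_nonneg hσ2.le)), integral_gaussianDensity hσ2,
    ENNReal.ofReal_one]

open Complex in
lemma charFun_gaussian (hσ2 : 0 < σ2) (t : EuclideanSpace ℝ (Fin d)) :
    charFun (gaussian d m σ2) t = cexp (⟪m, t⟫ * I - σ2 * ‖t‖ ^ 2 / 2) := by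
  set C := (2 * π * σ2) ^ (-(d : ℝ) / 2)
  have hb : 0 < ((2 * σ2)⁻¹ : ℂ).re := by norm_cast; positivity
  have hC : (C : ℂ) * (π / (2 * σ2 : ℂ)⁻¹) ^ ((d : ℂ) / 2) = 1 := by
    rw [show (π / (2 * σ2 : ℂ)⁻¹) = ((π / (2 * σ2)⁻¹ : ℝ) : ℂ) by push_cast; ring,
      show ((d : ℂ) / 2) = (((d : ℝ) / 2 : ℝ) : ℂ) by push_cast; ring,
      ← ofReal_cpow (by positivity), ← ofReal_mul, gaussian_normalization hσ2, ofReal_one]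
  have hpt : ∀ y, gaussianDensity d m σ2 (y + m) • cexp (⟪y + m, t⟫ * I) =
      (C * cexp (⟪m, t⟫ * I)) * cexp (-(2 * σ2 : ℂ)⁻¹ * ‖y‖ ^ 2 + I * ⟪t, y⟫) := by
    intro y
    rw [gaussianDensity_eq, add_sub_cancel_right, Complex.real_smul, Complex.ofReal_mul,
      Complex.ofReal_exp, inner_add_left, real_inner_comm y t]
    push_cast
    rw [mul_assoc _ (cexp _), mul_assoc _ (cexp _), ← Complex.exp_add, ← Complex.exp_add]
    congr 2
    ring
  rw [charFun_apply, gaussian_eq_withDensity, integral_withDensity_eq_integral_toReal_smul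
    measurable_gaussianDensity.ennreal_ofReal (ae_of_all _ fun _ => ENNReal.ofReal_lt_top),
    ← integral_add_right_eq_self _ m]
  simp only [ENNReal.toReal_ofReal (gaussianDensity_nonneg hσ2.le _), hpt]
  rw [integral_const_mul, GaussianFourier.integral_cexp_neg_mul_sq_norm_add hb,
    finrank_euclideanSpace_fin]
  calc (C : ℂ) * cexp (⟪m, t⟫ * I) * ((π / (2 * σ2 : ℂ)⁻¹) ^ ((d : ℂ) / 2) *
        cexp (I ^ 2 * ‖t‖ ^ 2 / (4 * (2 * σ2 : ℂ)⁻¹)))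
      = (C * (π / (2 * σ2 : ℂ)⁻¹) ^ ((d : ℂ) / 2)) *
          cexp (⟪m, t⟫ * I + I ^ 2 * ‖t‖ ^ 2 / (4 * (2 * σ2 : ℂ)⁻¹)) := by
        rw [Complex.exp_add]; ring
    _ = _ := by
        rw [hC, one_mul, I_sq]
        congr 1
        field_simp
        ring

lemma gaussian_eq_map_stdGaussian (hσ2 : 0 < σ2) :
    gaussian d m σ2 = (stdGaussian _).map fun x => m + √σ2 • x := by
  have := isProbabilityMeasure_gaussian (m := m) hσ2
  refine Measure.ext_of_charFun (funext fun t => ?_)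
  rw [charFun_gaussian hσ2, show (fun x => m + √σ2 • x) = (m + ·) ∘ (√σ2 • ·) from rfl,
    ← Measure.map_map (by fun_prop) (by fun_prop), charFun_map_const_add, charFun_map_smul,
    charFun_stdGaussian, ← Complex.exp_add, norm_smul, norm_of_nonneg (sqrt_nonneg _),
    ← Complex.ofReal_pow (√σ2 * _), mul_pow, sq_sqrt hσ2.le]
  push_cast
  ring_nf

lemma map_inner_stdGaussian {V : Type*} [NormedAddCommGroup V] [InnerProductSpace ℝ V]
    [FiniteDimensional ℝ V] [MeasurableSpace V] [BorelSpace V] {u : V} (hu : ‖u‖ = 1) :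
    (stdGaussian V).map (innerSL ℝ u) = gaussianReal 0 1 := by
  rw [IsGaussian.map_eq_gaussianReal, integral_strongDual_stdGaussian, variance_dual_stdGaussian,
    innerSL_apply_norm, hu]
  simp

lemma gaussian_setOf_inner_sub_le (hσ2 : 0 < σ2) {u : EuclideanSpace ℝ (Fin d)} (hu : ‖u‖ = 1)
    (a : ℝ) :
    gaussian d m σ2 {x | ⟪u, x - m⟫ ≤ a} = gaussianReal 0 1 (Set.Iic (a / √σ2)) := by
  have hσ : 0 < √σ2 := sqrt_pos.mpr hσ2
  rw [gaussian_eq_map_stdGaussian hσ2, ← map_inner_stdGaussian hu,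
    Measure.map_apply (by fun_prop) (measurableSet_le (by fun_prop) (by fun_prop)),
    Measure.map_apply (by fun_prop) measurableSet_Iic]
  congr 1
  ext x
  simp [inner_smul_right, le_div_iff₀ hσ, mul_comm]

lemma withDensity_apply_le_mul_add {α : Type*} [MeasurableSpace α] (ρ : Measure α)
    {f g : α → ℝ≥0∞} {c : ℝ≥0∞} (hc : c ≠ ∞) {S E : Set α} (hS : MeasurableSet S)
    (hE : MeasurableSet E) (hgf : ∀ x ∉ S, g x ≤ c * f x) :
    ρ.withDensity g E ≤ c * ρ.withDensity f E + ρ.withDensity g S := by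
  have hdiff : ρ.withDensity g (E \ S) ≤ c * ρ.withDensity f E := by
    rw [withDensity_apply _ (hE.diff hS), withDensity_apply _ hE]
    calc ∫⁻ x in E \ S, g x ∂ρ ≤ ∫⁻ x in E \ S, c * f x ∂ρ :=
          setLIntegral_mono' (hE.diff hS) fun x hx => hgf x hx.2
      _ = c * ∫⁻ x in E \ S, f x ∂ρ := lintegral_const_mul' c f hc
      _ ≤ c * ∫⁻ x in E, f x ∂ρ := by gcongr; exact Set.sdiff_subset
  calc ρ.withDensity g E = ρ.withDensity g (E ∩ S) + ρ.withDensity g (E \ S) :=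
        (measure_inter_add_sdiff E hS).symm
    _ ≤ ρ.withDensity g S + c * ρ.withDensity f E :=
        add_le_add (measure_mono Set.inter_subset_right) hdiff
    _ = c * ρ.withDensity f E + ρ.withDensity g S := add_comm _ _

lemma gaussianDensity_le_exp_mul {m₁ m₂ x : EuclideanSpace ℝ (Fin d)} {ε : ℝ} (hσ2 : 0 < σ2)
    (h : ‖x - m₁‖ ^ 2 - ‖x - m₂‖ ^ 2 ≤ 2 * σ2 * ε) :
    gaussianDensity d m₂ σ2 x ≤ Real.exp ε * gaussianDensity d m₁ σ2 x := by
  rw [gaussianDensity, gaussianDensity, mul_left_comm, ← Real.exp_add]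
  gcongr
  rw [← sub_nonneg]
  field_simp
  linarith

lemma norm_sub_sq_sub_norm_sub_sq_le {F : Type*} [NormedAddCommGroup F] [InnerProductSpace ℝ F]
    {m₁ m₂ u x : F} {t R c : ℝ} (hu : ‖u‖ = 1) (hδ : m₁ - m₂ = t • u) (ht : 0 ≤ t)
    (htR : t ≤ R) (hR : 0 < R) (hc : 0 ≤ c) (hx : R / 2 - c / R < ⟪u, x - m₂⟫) :
    ‖x - m₁‖ ^ 2 - ‖x - m₂‖ ^ 2 ≤ 2 * c := by
  have hexp : ‖x - m₁‖ ^ 2 = ‖x - m₂‖ ^ 2 - 2 * t * ⟪u, x - m₂⟫ + t ^ 2 := by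
    rw [show x - m₁ = (x - m₂) - t • u by rw [← hδ]; abel, norm_sub_sq_real,
      real_inner_smul_right, norm_smul, hu, norm_of_nonneg ht, real_inner_comm]
    ring
  have hcR : t * (c / R) ≤ c :=
    calc t * (c / R) ≤ R * (c / R) := by gcongr
      _ = c := mul_div_cancel₀ c hR.ne'
  -- `t² - 2t⟪u, x - m₂⟫ < t (t - R) + 2 t c / R ≤ 2c`
  nlinarith [mul_le_mul_of_nonneg_left hx.le ht,
    mul_nonpos_of_nonneg_of_nonpos ht (sub_nonpos.2 htR)]

lemma gaussian_apply_le_exp_mul_add {m₁ m₂ u : EuclideanSpace ℝ (Fin d)} {a ε : ℝ} (hσ2 : 0 < σ2)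
    (hu : ‖u‖ = 1) (hloss : ∀ x, a < ⟪u, x - m₂⟫ → ‖x - m₁‖ ^ 2 - ‖x - m₂‖ ^ 2 ≤ 2 * σ2 * ε)
    {E : Set (EuclideanSpace ℝ (Fin d))} (hE : MeasurableSet E) :
    (gaussian d m₂ σ2 E).toReal ≤
      Real.exp ε * (gaussian d m₁ σ2 E).toReal + stdNormalCDF (a / √σ2) := by
  have := isProbabilityMeasure_gaussian (m := m₁) hσ2
  have := isProbabilityMeasure_gaussian (m := m₂) hσ2
  have hS : MeasurableSet {x | ⟪u, x - m₂⟫ ≤ a} := measurableSet_le (by fun_prop) (by fun_prop)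
  have hle : gaussian d m₂ σ2 E ≤ ENNReal.ofReal (Real.exp ε) * gaussian d m₁ σ2 E +
      gaussian d m₂ σ2 {x | ⟪u, x - m₂⟫ ≤ a} := by
    refine withDensity_apply_le_mul_add volume ENNReal.ofReal_ne_top hS hE fun x hx => ?_
    rw [← ENNReal.ofReal_mul (exp_nonneg ε)]
    exact ENNReal.ofReal_le_ofReal (gaussianDensity_le_exp_mul hσ2 (hloss x (not_le.1 hx)))
  have hfin := ENNReal.toReal_mono (by finiteness) hle
  rwa [ENNReal.toReal_add (by finiteness) (by finiteness), ENNReal.toReal_mul,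
    ENNReal.toReal_ofReal (exp_nonneg ε), gaussian_setOf_inner_sub_le hσ2 hu] at hfin

theorem stmt0_general (d : ℕ) (ᾱ r ε : ℝ) (hᾱ : ᾱ ∈ Set.Ioo (0 : ℝ) 1)
    (hr : 0 < r) (hε : 0 ≤ ε) (x₀ Δx : EuclideanSpace ℝ (Fin d)) (hΔx : ‖Δx‖ < r)
    (E : Set (EuclideanSpace ℝ (Fin d))) (hE : MeasurableSet E) :
    ((gaussian d (Real.sqrt ᾱ • (x₀ + Δx)) (1 - ᾱ)) E).toReal ≤
      Real.exp ε * ((gaussian d (Real.sqrt ᾱ • x₀) (1 - ᾱ)) E).toReal +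
        stdNormalCDF (r * Real.sqrt ᾱ / (2 * Real.sqrt (1 - ᾱ)) -
          ε * Real.sqrt (1 - ᾱ) / (r * Real.sqrt ᾱ)) := by
  obtain ⟨hᾱ0, hᾱ1⟩ := hᾱ
  have hσ2 : 0 < 1 - ᾱ := sub_pos.2 hᾱ1
  rcases eq_or_ne Δx 0 with rfl | hΔx0
  · rw [add_zero]
    exact le_add_of_le_of_nonneg (le_mul_of_one_le_left ENNReal.toReal_nonneg (one_le_exp hε))
      ENNReal.toReal_nonneg
  have hδ : ‖√ᾱ • x₀ - √ᾱ • (x₀ + Δx)‖ = √ᾱ * ‖Δx‖ := by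
    rw [← smul_sub, sub_add_cancel_left, norm_smul, norm_neg, norm_of_nonneg (sqrt_nonneg _)]
  set δ := √ᾱ • x₀ - √ᾱ • (x₀ + Δx)
  have ht : 0 < ‖δ‖ := by rw [hδ]; have := norm_pos_iff.2 hΔx0; positivity
  have hu : ‖‖δ‖⁻¹ • δ‖ = 1 := by rw [norm_smul, norm_inv, norm_norm, inv_mul_cancel₀ ht.ne']
  have hloss : ∀ x, r * √ᾱ / 2 - (1 - ᾱ) * ε / (r * √ᾱ) < ⟪‖δ‖⁻¹ • δ, x - √ᾱ • (x₀ + Δx)⟫ →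
      ‖x - √ᾱ • x₀‖ ^ 2 - ‖x - √ᾱ • (x₀ + Δx)‖ ^ 2 ≤ 2 * (1 - ᾱ) * ε := fun x hx => by
    rw [mul_assoc]
    refine norm_sub_sq_sub_norm_sub_sq_le hu ?_ ht.le ?_ (by positivity) (by positivity) hx
    · rw [smul_smul, mul_inv_cancel₀ ht.ne', one_smul]
    · rw [hδ, mul_comm]
      gcongr
  refine (gaussian_apply_le_exp_mul_add hσ2 hu hloss hE).trans_eq ?_
  have hσ : √(1 - ᾱ) ^ 2 = 1 - ᾱ := sq_sqrt hσ2.le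
  congr 2
  field_simp
  rw [hσ]
  ring

theorem stmt0 (d : ℕ) (hd : 1 ≤ d) (ᾱ r ε : ℝ) (hᾱ : ᾱ ∈ Set.Ioo (0 : ℝ) 1)
    (hr : 0 < r) (hε : 0 ≤ ε) (x₀ Δx : EuclideanSpace ℝ (Fin d)) (hΔx : ‖Δx‖ < r)
    (E : Set (EuclideanSpace ℝ (Fin d))) (hE : MeasurableSet E) :
    ((gaussian d (Real.sqrt ᾱ • (x₀ + Δx)) (1 - ᾱ)) E).toReal ≤
      Real.exp ε * ((gaussian d (Real.sqrt ᾱ • x₀) (1 - ᾱ)) E).toReal +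
        stdNormalCDF (r * Real.sqrt ᾱ / (2 * Real.sqrt (1 - ᾱ)) -
          ε * Real.sqrt (1 - ᾱ) / (r * Real.sqrt ᾱ)) :=
  stmt0_general d ᾱ r ε hᾱ hr hε x₀ Δx hΔx E hE
end

section
/- Let r > 0 and ε ≥ 0 be fixed. The function f : (0,1) → ℝ defined by f(a) = Φ( r·√a/(2·√(1−a)) − ε·√(1−a)/(r·√a) ) is strictly monotonically increasing on (0,1). Consequently, if β₁, β₂, … ∈ (0,1) and ᾱ_T = ∏_{t=1}^{T} (1−β_t), then the failure probability δ(T) = f(ᾱ_T) is strictly decreasing in the diffusion length T. -/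
open MeasureTheory ProbabilityTheory Real

lemma stdNormalCDF_strictMono : StrictMono stdNormalCDF := by
  intro x y hxy
  unfold stdNormalCDF
  have hunion : Set.Iic y = Set.Iic x ∪ Set.Ioc x y :=
    (Set.Iic_union_Ioc_eq_Iic hxy.le).symm
  have hdisj : Disjoint (Set.Iic x) (Set.Ioc x y) := by
    rw [Set.disjoint_left]; intro z hz hz2; exact absurd hz2.1 (not_lt.2 hz)
  have hmeas : (gaussianReal 0 1) (Set.Iic y)
      = (gaussianReal 0 1) (Set.Iic x) + (gaussianReal 0 1) (Set.Ioc x y) := by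
    rw [hunion, measure_union hdisj measurableSet_Ioc]
  have hpos : 0 < (gaussianReal 0 1) (Set.Ioc x y) := by
    have hac := gaussianReal_absolutelyContinuous' 0 (v := 1) one_ne_zero
    have hne : (gaussianReal 0 1) (Set.Ioc x y) ≠ 0 := by
      intro h
      have hv : (volume : Measure ℝ) (Set.Ioc x y) = 0 := hac h
      rw [Real.volume_Ioc] at hv
      simp only [ENNReal.ofReal_eq_zero] at hv
      linarith
    exact pos_iff_ne_zero.mpr hne
  have h1 : (gaussianReal 0 1) (Set.Iic x) ≠ ⊤ := measure_ne_top _ _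
  have h2 : (gaussianReal 0 1) (Set.Ioc x y) ≠ ⊤ := measure_ne_top _ _
  rw [hmeas, ENNReal.toReal_add h1 h2]
  have : 0 < ((gaussianReal 0 1) (Set.Ioc x y)).toReal :=
    ENNReal.toReal_pos hpos.ne' h2
  linarith

theorem stmt4 (r ε : ℝ) (hr : 0 < r) (hε : 0 ≤ ε)
    (f : ℝ → ℝ)
    (hf : ∀ a, f a = stdNormalCDF (r * Real.sqrt a / (2 * Real.sqrt (1 - a)) -
      ε * Real.sqrt (1 - a) / (r * Real.sqrt a))) :
    StrictMonoOn f (Set.Ioo (0 : ℝ) 1) ∧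
      ∀ (β : ℕ → ℝ), (∀ t, β t ∈ Set.Ioo (0 : ℝ) 1) →
        StrictAntiOn (fun T : ℕ => f (∏ t ∈ Finset.Icc 1 T, (1 - β t))) (Set.Ici 1) := by
  have hmono : StrictMonoOn f (Set.Ioo (0 : ℝ) 1) := by
    intro a ha b hb hab
    rw [hf a, hf b]
    apply stdNormalCDF_strictMono
    obtain ⟨ha0, ha1⟩ := ha
    obtain ⟨hb0, hb1⟩ := hb
    have hsa : 0 < Real.sqrt a := Real.sqrt_pos.2 ha0
    have hsb : 0 < Real.sqrt b := Real.sqrt_pos.2 hb0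
    have hs1a : 0 < Real.sqrt (1 - a) := Real.sqrt_pos.2 (by linarith)
    have hs1b : 0 < Real.sqrt (1 - b) := Real.sqrt_pos.2 (by linarith)
    have hab' : Real.sqrt a < Real.sqrt b := Real.sqrt_lt_sqrt ha0.le hab
    have h1ab : Real.sqrt (1 - b) < Real.sqrt (1 - a) :=
      Real.sqrt_lt_sqrt (by linarith) (by linarith)
    have hA : r * Real.sqrt a / (2 * Real.sqrt (1 - a))
        < r * Real.sqrt b / (2 * Real.sqrt (1 - b)) := by
      exact div_lt_div₀ (by nlinarith) (by nlinarith) (by positivity) (by positivity)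
    have hB : ε * Real.sqrt (1 - b) / (r * Real.sqrt b)
        ≤ ε * Real.sqrt (1 - a) / (r * Real.sqrt a) := by
      apply div_le_div₀ (by positivity) (by nlinarith) (by positivity) (by nlinarith)
    linarith
  refine ⟨hmono, fun β hβ => ?_⟩
  set α : ℕ → ℝ := fun T => ∏ t ∈ Finset.Icc 1 T, (1 - β t) with hα
  have hfac : ∀ t, 0 < 1 - β t ∧ 1 - β t < 1 := by
    intro t; obtain ⟨h1, h2⟩ := hβ t; constructor <;> linarith
  have hIcc : ∀ T : ℕ, Finset.Icc 1 T = Finset.Ioc 0 T := by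
    intro T; ext t; simp [Nat.lt_iff_add_one_le]
  have hαpos : ∀ T : ℕ, 0 < α T := by
    intro T; exact Finset.prod_pos fun t _ => (hfac t).1
  have hαlt1 : ∀ T : ℕ, 1 ≤ T → α T < 1 := by
    intro T hT
    have hne : (Finset.Icc 1 T).Nonempty := ⟨1, by simp [hT]⟩
    calc α T < ∏ t ∈ Finset.Icc 1 T, 1 :=
          Finset.prod_lt_prod_of_nonempty (fun t _ => (hfac t).1) (fun t _ => (hfac t).2) hne
    _ = 1 := Finset.prod_const_one
  have hαanti : ∀ S T : ℕ, 1 ≤ S → S < T → α T < α S := by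
    intro S T hS hST
    have hsplit : α S * ∏ t ∈ Finset.Ioc S T, (1 - β t) = α T := by
      simp only [hα, hIcc]
      exact Finset.prod_Ioc_consecutive _ (Nat.zero_le S) hST.le
    have hPpos : 0 < ∏ t ∈ Finset.Ioc S T, (1 - β t) :=
      Finset.prod_pos fun t _ => (hfac t).1
    have hPlt1 : ∏ t ∈ Finset.Ioc S T, (1 - β t) < 1 := by
      have hne : (Finset.Ioc S T).Nonempty := ⟨T, by simp [hST]⟩
      calc ∏ t ∈ Finset.Ioc S T, (1 - β t) < ∏ t ∈ Finset.Ioc S T, 1 :=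
            Finset.prod_lt_prod_of_nonempty (fun t _ => (hfac t).1) (fun t _ => (hfac t).2) hne
      _ = 1 := Finset.prod_const_one
    calc α T = α S * ∏ t ∈ Finset.Ioc S T, (1 - β t) := hsplit.symm
    _ < α S * 1 := by
        apply mul_lt_mul_of_pos_left hPlt1 (hαpos S)
    _ = α S := mul_one _
  intro S hS T hT hST
  simp only [Set.mem_Ici] at hS hT
  exact hmono ⟨hαpos T, hαlt1 T hT⟩ ⟨hαpos S, hαlt1 S hS⟩ (hαanti S T hS hST)
end
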